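/- arXiv:2509.03697 — 4 statements merged into one kernel-verified Lean document; each statement's English description precedes it below -/
import Mathlib

section
/- With (x_k), (p_n), (q_n) as above, the sequence q_n / p_n is (weakly) increasing in n. -/
/-!
Write `dₙ = x_{n+1} - xₙ ≥ 1`, `Pₙ = ∑_{i ≤ n} pᵢ` and `Qₙ = ∑_{i ≤ n} (qᵢ + 1)`. Taking first
differences of the defining sums gives `p_{n+1} = pₙ + dₙ (1 + Pₙ)` and
`q_{n+1} = qₙ + dₙ (x_{n+1} + xₙ + Qₙ)`, so `q_{n+1}/p_{n+1}` is a mediant of `qₙ/pₙ` and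
`(x_{n+1} + xₙ + Qₙ)/(1 + Pₙ)`. It therefore suffices that the second fraction dominates the
first, and since `x_{n+1} ≥ xₙ + 1` this follows from the invariant
`(2xₙ + 1 + Qₙ) pₙ ≥ qₙ (1 + Pₙ)`, whose left-minus-right side is nondecreasing in `n`.
-/

open Finset

theorem succ_eq_of_eq_add_sum_Ico {R : Type*} [CommRing R] {x c a b : ℕ → R}
    (h : ∀ n, 1 ≤ n → a n = c n + ∑ i ∈ Ico 1 n, (x n - x i) * b i) {n : ℕ} (hn : 1 ≤ n) :
    a (n + 1) = a n + (c (n + 1) - c n) + (x (n + 1) - x n) * ∑ i ∈ Icc 1 n, b i := by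
  have split : ∑ i ∈ Ico 1 (n + 1), (x (n + 1) - x i) * b i =
      ∑ i ∈ Ico 1 (n + 1), (x n - x i) * b i + (x (n + 1) - x n) * ∑ i ∈ Ico 1 (n + 1), b i := by
    rw [mul_sum, ← sum_add_distrib]
    exact sum_congr rfl fun i _ => by ring
  have drop_last : ∑ i ∈ Ico 1 (n + 1), (x n - x i) * b i = ∑ i ∈ Ico 1 n, (x n - x i) * b i := by
    rw [sum_Ico_succ_top hn, sub_self, zero_mul, add_zero]
  rw [h (n + 1) (by omega), split, drop_last, h n hn, Ico_add_one_right_eq_Icc]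
  ring

section

variable {x p q : ℕ → ℝ}

theorem pos_of_succ_eq_add_mul_one_add_sum (hx : Monotone x) (hp1 : 0 < p 1)
    (hp : ∀ n, 1 ≤ n → p (n + 1) = p n + (x (n + 1) - x n) * (1 + ∑ i ∈ Icc 1 n, p i))
    {n : ℕ} (hn : 1 ≤ n) : 0 < p n := by
  suffices ∀ n, ∀ i ∈ Icc 1 n, 0 < p i from this n n (mem_Icc.2 ⟨hn, le_rfl⟩)
  intro n
  induction n with
  | zero => simp
  | succ n ih =>
    intro i hi
    obtain ⟨hi1, hin⟩ := mem_Icc.1 hi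
    rcases hin.lt_or_eq with hlt | rfl
    · exact ih i (mem_Icc.2 ⟨hi1, by omega⟩)
    rcases Nat.eq_zero_or_pos n with rfl | hn
    · exact hp1
    have hsum : 0 ≤ ∑ i ∈ Icc 1 n, p i := sum_nonneg fun i hi => (ih i hi).le
    have hd : 0 ≤ x (n + 1) - x n := sub_nonneg.2 (hx n.le_succ)
    rw [hp n hn]
    exact add_pos_of_pos_of_nonneg (ih n (mem_Icc.2 ⟨hn, le_rfl⟩)) (by positivity)

def ratioGap (x p q : ℕ → ℝ) (n : ℕ) : ℝ :=
  (2 * x n + 1 + ∑ i ∈ Icc 1 n, (q i + 1)) * p n - q n * (1 + ∑ i ∈ Icc 1 n, p i)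

theorem ratioGap_nonneg (hx : Monotone x) (hx1 : 0 < x 1) (hp1 : p 1 = x 1)
    (hq1 : q 1 = x 1 ^ 2)
    (hp : ∀ n, 1 ≤ n → p (n + 1) = p n + (x (n + 1) - x n) * (1 + ∑ i ∈ Icc 1 n, p i))
    (hq : ∀ n, 1 ≤ n →
      q (n + 1) = q n + (x (n + 1) - x n) * (x (n + 1) + x n + ∑ i ∈ Icc 1 n, (q i + 1)))
    {n : ℕ} (hn : 1 ≤ n) : 0 ≤ ratioGap x p q n := by
  induction n, hn using Nat.le_induction with
  | base =>
    simp only [ratioGap, Icc_self, sum_singleton, hp1, hq1]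
    nlinarith
  | succ n hn ih =>
    set d := x (n + 1) - x n
    have step : ratioGap x p q (n + 1) = ratioGap x p q n + (2 * d + 1) * p n
        + d * (d + 2) * (1 + ∑ i ∈ Icc 1 n, p i) := by
      simp only [ratioGap]
      rw [sum_Icc_succ_top (by omega), sum_Icc_succ_top (by omega), hp n hn, hq n hn]
      ring
    have hd : 0 ≤ d := sub_nonneg.2 (hx n.le_succ)
    have hpn : 0 < p n := pos_of_succ_eq_add_mul_one_add_sum hx (hp1 ▸ hx1) hp hn
    have hsum : 0 ≤ ∑ i ∈ Icc 1 n, p i :=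
      sum_nonneg fun i hi => (pos_of_succ_eq_add_mul_one_add_sum hx (hp1 ▸ hx1) hp
        (mem_Icc.1 hi).1).le
    rw [step]
    positivity

theorem div_le_div_succ_of_succ_eq (hx : ∀ n, x n + 1 ≤ x (n + 1)) (hx1 : 0 < x 1)
    (hp1 : p 1 = x 1) (hq1 : q 1 = x 1 ^ 2)
    (hp : ∀ n, 1 ≤ n → p (n + 1) = p n + (x (n + 1) - x n) * (1 + ∑ i ∈ Icc 1 n, p i))
    (hq : ∀ n, 1 ≤ n →
      q (n + 1) = q n + (x (n + 1) - x n) * (x (n + 1) + x n + ∑ i ∈ Icc 1 n, (q i + 1)))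
    {n : ℕ} (hn : 1 ≤ n) : q n / p n ≤ q (n + 1) / p (n + 1) := by
  have hmono : Monotone x := monotone_nat_of_le_succ fun n => by linarith [hx n]
  have hpos : ∀ {n}, 1 ≤ n → 0 < p n := pos_of_succ_eq_add_mul_one_add_sum hmono (hp1 ▸ hx1) hp
  have hgap := ratioGap_nonneg hmono hx1 hp1 hq1 hp hq hn
  have hd : 1 ≤ x (n + 1) - x n := by linarith [hx n]
  have cross : q (n + 1) * p n - q n * p (n + 1) =
      (x (n + 1) - x n) * (ratioGap x p q n + (x (n + 1) - x n - 1) * p n) := by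
    rw [hp n hn, hq n hn, ratioGap]
    ring
  rw [div_le_div_iff₀ (hpos hn) (hpos (by omega)), ← sub_nonneg, cross]
  have hpn := hpos hn
  have hd' : 0 ≤ x (n + 1) - x n - 1 := by linarith
  positivity

end

theorem q_div_p_monotone_general (x : ℕ → ℕ) (hx : StrictMono x)
    (p q : ℕ → ℝ)
    (hp1 : p 1 = x 1)
    (hp : ∀ n, 2 ≤ n → p n = x n + ∑ i ∈ Finset.Ico 1 n, ((x n : ℝ) - x i) * p i)
    (hq1 : q 1 = (x 1 : ℝ) ^ 2)
    (hq : ∀ n, 2 ≤ n → q n = (x n : ℝ) ^ 2 + ∑ i ∈ Finset.Ico 1 n, ((x n : ℝ) - x i) * (q i + 1)) :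
    ∀ n, 1 ≤ n → q n / p n ≤ q (n + 1) / p (n + 1) := by
  have hx_succ (n : ℕ) : (x n : ℝ) + 1 ≤ x (n + 1) := by exact_mod_cast hx n.lt_succ_self
  have hx1 : (0 : ℝ) < x 1 := by exact_mod_cast (x 0).zero_le.trans_lt (hx Nat.zero_lt_one)
  have hp' : ∀ n, 1 ≤ n → p n = x n + ∑ i ∈ Ico 1 n, ((x n : ℝ) - x i) * p i := fun n hn =>
    hn.eq_or_lt.elim (fun h => by simp [← h, hp1]) (hp n)
  have hq' : ∀ n, 1 ≤ n → q n = (x n : ℝ) ^ 2 + ∑ i ∈ Ico 1 n, ((x n : ℝ) - x i) * (q i + 1) :=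
    fun n hn => hn.eq_or_lt.elim (fun h => by simp [← h, hq1]) (hq n)
  intro n hn
  refine div_le_div_succ_of_succ_eq hx_succ hx1 hp1 hq1 (fun n hn => ?_) (fun n hn => ?_) hn
  · rw [succ_eq_of_eq_add_sum_Ico hp' hn]
    ring
  · rw [succ_eq_of_eq_add_sum_Ico hq' hn]
    ring

/-- The sequence qₙ/pₙ is weakly increasing. -/
theorem q_div_p_monotone (x : ℕ → ℕ) (hx : StrictMono x) (hx1 : 0 < x 1)
    (p q : ℕ → ℝ)
    (hp1 : p 1 = x 1)
    (hp : ∀ n, 2 ≤ n → p n = x n + ∑ i ∈ Finset.Ico 1 n, ((x n : ℝ) - x i) * p i)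
    (hq1 : q 1 = (x 1 : ℝ) ^ 2)
    (hq : ∀ n, 2 ≤ n → q n = (x n : ℝ) ^ 2 + ∑ i ∈ Finset.Ico 1 n, ((x n : ℝ) - x i) * (q i + 1)) :
    ∀ n, 1 ≤ n → q n / p n ≤ q (n + 1) / p (n + 1) :=
  q_div_p_monotone_general x hx p q hp1 hp hq1 hq
end

section
/- Let a > \sqrt{2} be real and suppose a strictly increasing sequence of positive integers (x_k) satisfies x_k \le \prod_{r=1}^{k-1}(1 + x_r) for all k \ge k_0, and x_k \le a^{2^k} for all k < k_0. Then x_k \le a^{2^k} for all k \ge 1. -/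
/-!
Strong induction on `k`. Once `x r ≤ a ^ 2 ^ r` for `1 ≤ r < k`, the product `∏ (1 + x r)` is at
most `∏ (1 + a ^ 2 ^ r) = (a ^ 2 ^ k - 1) / (a ^ 2 - 1)` by telescoping, and this is `≤ a ^ 2 ^ k`
because `a ^ 2 - 1 ≥ 1`.
-/

open Finset

theorem sub_one_mul_prod_one_add_pow_two_pow {R : Type*} [CommRing R] (a : R) (n : ℕ) :
    (a ^ 2 - 1) * ∏ r ∈ Icc 1 n, (1 + a ^ 2 ^ r) = a ^ 2 ^ (n + 1) - 1 := by
  induction n with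
  | zero => simp
  | succ n ih =>
    rw [prod_Icc_succ_top (by omega), ← mul_assoc, ih, pow_succ 2 (n + 1), pow_mul]
    ring

theorem prod_one_add_pow_two_pow_le {R : Type*} [CommRing R] [LinearOrder R] [IsStrictOrderedRing R]
    {a : R} (ha : 2 ≤ a ^ 2) (n : ℕ) :
    ∏ r ∈ Icc 1 n, (1 + a ^ 2 ^ r) ≤ a ^ 2 ^ (n + 1) := by
  have hprod : 0 ≤ ∏ r ∈ Icc 1 n, (1 + a ^ 2 ^ r) := prod_nonneg fun r hr => by
    have heven : Even (2 ^ r) := (Nat.even_pow' (by grind)).2 even_two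
    linarith [heven.pow_nonneg a]
  calc ∏ r ∈ Icc 1 n, (1 + a ^ 2 ^ r) ≤ (a ^ 2 - 1) * ∏ r ∈ Icc 1 n, (1 + a ^ 2 ^ r) :=
        le_mul_of_one_le_left hprod (by linarith)
    _ = a ^ 2 ^ (n + 1) - 1 := sub_one_mul_prod_one_add_pow_two_pow a n
    _ ≤ a ^ 2 ^ (n + 1) := sub_le_self _ zero_le_one

theorem double_exponential_bound_general (x : ℕ → ℕ)
    (a : ℝ) (ha : Real.sqrt 2 < a) (k₀ : ℕ)
    (h1 : ∀ k, k₀ ≤ k → (x k : ℝ) ≤ ∏ r ∈ Finset.Icc 1 (k - 1), (1 + (x r : ℝ)))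
    (h2 : ∀ k, 1 ≤ k → k < k₀ → (x k : ℝ) ≤ a ^ (2 ^ k)) :
    ∀ k, 1 ≤ k → (x k : ℝ) ≤ a ^ (2 ^ k) := by
  have ha2 : 2 ≤ a ^ 2 := ((Real.sqrt_lt' ((Real.sqrt_nonneg 2).trans_lt ha)).1 ha).le
  intro k
  induction k using Nat.strong_induction_on with
  | _ k ih =>
    intro hk
    rcases lt_or_ge k k₀ with hlt | hge
    · exact h2 k hk hlt
    obtain ⟨n, rfl⟩ : ∃ n, k = n + 1 := ⟨k - 1, by omega⟩
    calc (x (n + 1) : ℝ) ≤ ∏ r ∈ Icc 1 n, (1 + (x r : ℝ)) := h1 (n + 1) hge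
      _ ≤ ∏ r ∈ Icc 1 n, (1 + a ^ 2 ^ r) :=
        prod_le_prod (fun r _ => by positivity) fun r hr => by
          grw [ih r (by grind) (mem_Icc.1 hr).1]
      _ ≤ a ^ 2 ^ (n + 1) := prod_one_add_pow_two_pow_le ha2 n

/-- If a > √2, x_k ≤ ∏_{r=1}^{k-1}(1+x_r) for k ≥ k₀, and x_k ≤ a^{2^k} for k < k₀,
then x_k ≤ a^{2^k} for all k ≥ 1. -/
theorem double_exponential_bound (x : ℕ → ℕ) (hx : StrictMono x) (hx1 : 0 < x 1)
    (a : ℝ) (ha : Real.sqrt 2 < a) (k₀ : ℕ) (hk₀ : 1 ≤ k₀)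
    (h1 : ∀ k, k₀ ≤ k → (x k : ℝ) ≤ ∏ r ∈ Finset.Icc 1 (k - 1), (1 + (x r : ℝ)))
    (h2 : ∀ k, 1 ≤ k → k < k₀ → (x k : ℝ) ≤ a ^ (2 ^ k)) :
    ∀ k, 1 ≤ k → (x k : ℝ) ≤ a ^ (2 ^ k) :=
  double_exponential_bound_general x a ha k₀ h1 h2
end

section
/- If a strictly increasing sequence of positive integers (x_k) satisfies: for every a > 1 there exists k \ge 1 with x_k > a^{2^k}, then the series \sum_{n \ge 1} x_n \prod_{r=1}^{n-1} 1/(1+x_r) diverges. -/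
/-!
Write `Q m = ∏_{r=1}^m (1 + x_r)`, so that the `n`-th term of the series is `x_n / Q (n-1)`.
If the series converges its terms are bounded by some `C ≥ 1`, so `x_{m+1} ≤ C Q m` and
`Q (m+1) = Q m (1 + x_{m+1}) ≤ 2 C (Q m)^2`. Thus `2 C Q m` at most squares at each step,
giving `x_{m+1} ≤ 2 C Q m ≤ (2C)^{2^m}`, against the hypothesis with `a = 2C`.
-/

open Finset

theorem le_pow_two_pow_of_le_sq {R : Type*} [CommSemiring R] [PartialOrder R] [IsOrderedRing R]
    {b : ℕ → R} (hb : ∀ m, 0 ≤ b m) (hsq : ∀ m, b (m + 1) ≤ b m ^ 2) (m : ℕ) :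
    b m ≤ b 0 ^ 2 ^ m := by
  induction m with
  | zero => simp
  | succ m ih =>
    calc b (m + 1) ≤ b m ^ 2 := hsq m
      _ ≤ (b 0 ^ 2 ^ m) ^ 2 := pow_le_pow_left₀ (hb m) ih 2
      _ = b 0 ^ 2 ^ (m + 1) := by rw [← pow_mul, pow_succ]

theorem le_two_mul_pow_two_pow_of_le_mul_prod {x : ℕ → ℝ} (hx : ∀ r, 0 ≤ x r) {C : ℝ}
    (hC : 1 ≤ C) (hbound : ∀ m, x (m + 1) ≤ C * ∏ r ∈ Icc 1 m, (1 + x r)) (m : ℕ) :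
    x (m + 1) ≤ (2 * C) ^ 2 ^ m := by
  set Q : ℕ → ℝ := fun m => ∏ r ∈ Icc 1 m, (1 + x r)
  have hCQ : ∀ m, 1 ≤ C * Q m := fun m =>
    one_le_mul_of_one_le_of_one_le hC (one_le_prod fun r _ => le_add_of_nonneg_right (hx r))
  have hsq : ∀ m, 2 * C * Q (m + 1) ≤ (2 * C * Q m) ^ 2 := fun m => by
    have hCQm := hCQ m
    calc 2 * C * Q (m + 1) = 2 * C * Q m * (1 + x (m + 1)) := by
          rw [show Q (m + 1) = Q m * (1 + x (m + 1)) from prod_Icc_succ_top (by omega) _]; ring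
      _ ≤ 2 * C * Q m * (C * Q m + C * Q m) := by gcongr; exacts [by linarith, hbound m]
      _ = (2 * C * Q m) ^ 2 := by ring
  calc x (m + 1) ≤ C * Q m := hbound m
    _ ≤ 2 * C * Q m := by linarith [hCQ m]
    _ ≤ (2 * C * Q 0) ^ 2 ^ m :=
      le_pow_two_pow_of_le_sq (b := fun m => 2 * C * Q m) (fun m => by linarith [hCQ m]) hsq m
    _ = (2 * C) ^ 2 ^ m := by simp [Q]

theorem critical_not_summable_general (x : ℕ → ℕ)
    (h : ∀ a : ℝ, 1 < a → ∃ k, 1 ≤ k ∧ a ^ (2 ^ k) < (x k : ℝ)) :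
    ¬ Summable (fun n => (x n : ℝ) * ∏ r ∈ Finset.Icc 1 (n - 1), (1 / (1 + (x r : ℝ)))) := by
  intro hs
  obtain ⟨C₀, hC₀⟩ := hs.tendsto_atTop_zero.bddAbove_range
  obtain ⟨C, hC₀C, hC⟩ : ∃ C, C₀ ≤ C ∧ 1 ≤ C := ⟨max C₀ 1, le_max_left _ _, le_max_right _ _⟩
  have hbound : ∀ m, (x (m + 1) : ℝ) ≤ C * ∏ r ∈ Icc 1 m, (1 + (x r : ℝ)) := fun m => by
    have hterm := (hC₀ ⟨m + 1, rfl⟩).trans hC₀C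
    simp only [Nat.add_sub_cancel, one_div, prod_inv_distrib, ← div_eq_mul_inv] at hterm
    exact (div_le_iff₀ (prod_pos fun r _ => by positivity)).mp hterm
  have h2C : 1 < 2 * C := by linarith
  obtain ⟨k, hk, hxk⟩ := h (2 * C) h2C
  obtain ⟨m, rfl⟩ := Nat.exists_eq_add_of_le' hk
  have hx_le : (x (m + 1) : ℝ) ≤ (2 * C) ^ 2 ^ m :=
    le_two_mul_pow_two_pow_of_le_mul_prod (fun r => Nat.cast_nonneg (x r)) hC hbound m
  have hpow_mono : (2 * C) ^ 2 ^ m ≤ (2 * C) ^ 2 ^ (m + 1) :=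
    pow_le_pow_right₀ h2C.le (Nat.pow_le_pow_right two_pos (m.le_add_right 1))
  linarith

/-- If for every a > 1 some x_k exceeds a^{2^k}, then ∑ x_n ∏_{r=1}^{n-1} 1/(1+x_r)
diverges. -/
theorem critical_not_summable (x : ℕ → ℕ) (hx : StrictMono x) (hx1 : 0 < x 1)
    (h : ∀ a : ℝ, 1 < a → ∃ k, 1 ≤ k ∧ a ^ (2 ^ k) < (x k : ℝ)) :
    ¬ Summable (fun n => (x n : ℝ) * ∏ r ∈ Finset.Icc 1 (n - 1), (1 / (1 + (x r : ℝ)))) :=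
  critical_not_summable_general x h
end

section
/- Let 0 < \lambda < 1 and let \phi_{\kappa,\lambda} be the unique positive root of X^{\kappa+1} - X^\kappa - \lambda(X^\kappa + ... + X + 1). Then \phi_{\kappa,\lambda} \ge 1 + \lambda, and as \kappa \to \infty, \phi_{\kappa,\lambda} converges to \phi_\lambda := (2 + \lambda + \sqrt{\lambda^2 + 4\lambda})/2. -/
/-!
The root equation reads `φ^κ (φ - 1) = λ (φ^κ + ⋯ + 1) ≥ λ φ^κ`, whence `φ ≥ 1 + λ`.
Multiplying it by `φ - 1` and summing the geometric series gives
`(φ² - (2 + λ) φ + 1) φ^κ = -λ`, i.e. `(φ_λ - φ) (φ - ψ) φ^κ = λ` with `ψ = 2 + λ - φ_λ` the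
other root of the quadratic. As `φ, φ_λ ≥ 1 + λ`, we have `φ - ψ ≥ λ` and `φ^κ ≥ (1 + λ)^κ`, so
`0 ≤ φ_λ - φ ≤ (1 + λ)^{-κ}`.
-/

open Filter Topology Finset

noncomputable def phiLimit (l : ℝ) : ℝ := (2 + l + √(l ^ 2 + 4 * l)) / 2

section PhiLimit

variable {l : ℝ}

lemma phiLimit_sq_sub_add_one (hl : 0 ≤ l) : phiLimit l ^ 2 - (2 + l) * phiLimit l + 1 = 0 := by
  have hsq : √(l ^ 2 + 4 * l) ^ 2 = l ^ 2 + 4 * l := Real.sq_sqrt (by positivity)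
  unfold phiLimit
  linear_combination hsq / 4

lemma one_add_le_phiLimit (hl : 0 ≤ l) : 1 + l ≤ phiLimit l := by
  have : l ≤ √(l ^ 2 + 4 * l) := Real.le_sqrt_of_sq_le (by linarith)
  unfold phiLimit
  linarith

end PhiLimit

section Root

variable {l x : ℝ} {κ : ℕ}

lemma one_add_le_of_root (hl : 0 ≤ l) (hx : 0 < x)
    (h : x ^ (κ + 1) - x ^ κ - l * ∑ i ∈ range (κ + 1), x ^ i = 0) : 1 + l ≤ x := by
  have hsum : x ^ κ ≤ ∑ i ∈ range (κ + 1), x ^ i :=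
    single_le_sum (fun i _ => (pow_pos hx i).le) (self_mem_range_succ κ)
  have : l * x ^ κ ≤ (x - 1) * x ^ κ := by
    rw [pow_succ] at h
    nlinarith [mul_le_mul_of_nonneg_left hsum hl]
  linarith [le_of_mul_le_mul_right this (pow_pos hx κ)]

lemma quadratic_mul_pow_of_root
    (h : x ^ (κ + 1) - x ^ κ - l * ∑ i ∈ range (κ + 1), x ^ i = 0) :
    (x ^ 2 - (2 + l) * x + 1) * x ^ κ = -l := by
  have hgeom : (∑ i ∈ range (κ + 1), x ^ i) * (x - 1) = x ^ (κ + 1) - 1 := geom_sum_mul x _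
  have hsucc : x ^ (κ + 1) = x ^ κ * x := pow_succ x κ
  linear_combination (x - 1) * h + l * hgeom + (1 + l - x) * hsucc

lemma phiLimit_sub_mul_mul_pow_of_root (hl : 0 ≤ l)
    (h : x ^ (κ + 1) - x ^ κ - l * ∑ i ∈ range (κ + 1), x ^ i = 0) :
    (phiLimit l - x) * (x + phiLimit l - (2 + l)) * x ^ κ = l := by
  linear_combination -quadratic_mul_pow_of_root h + x ^ κ * phiLimit_sq_sub_add_one hl

lemma le_phiLimit_of_root (hl : 0 < l) (hx : 0 < x)
    (h : x ^ (κ + 1) - x ^ κ - l * ∑ i ∈ range (κ + 1), x ^ i = 0) : x ≤ phiLimit l := by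
  by_contra! hlt
  have hother : 0 < x + phiLimit l - (2 + l) := by
    linarith [one_add_le_of_root hl.le hx h, one_add_le_phiLimit hl.le]
  have : (phiLimit l - x) * (x + phiLimit l - (2 + l)) * x ^ κ < 0 :=
    mul_neg_of_neg_of_pos (mul_neg_of_neg_of_pos (by linarith) hother) (pow_pos hx κ)
  linarith [phiLimit_sub_mul_mul_pow_of_root hl.le h]

lemma phiLimit_sub_le_of_root (hl : 0 < l) (hx : 0 < x)
    (h : x ^ (κ + 1) - x ^ κ - l * ∑ i ∈ range (κ + 1), x ^ i = 0) :
    phiLimit l - x ≤ ((1 + l) ^ κ)⁻¹ := by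
  have hroot : 1 + l ≤ x := one_add_le_of_root hl.le hx h
  have hgap : 0 ≤ phiLimit l - x := sub_nonneg.mpr (le_phiLimit_of_root hl hx h)
  have hother : l ≤ x + phiLimit l - (2 + l) := by linarith [one_add_le_phiLimit hl.le]
  have hpow : (1 + l) ^ κ ≤ x ^ κ := pow_le_pow_left₀ (by linarith) hroot κ
  rw [← one_div, le_div_iff₀ (by positivity)]
  refine le_of_mul_le_mul_right ?_ hl
  calc (phiLimit l - x) * (1 + l) ^ κ * l
      = (phiLimit l - x) * l * (1 + l) ^ κ := by ring
    _ ≤ (phiLimit l - x) * (x + phiLimit l - (2 + l)) * x ^ κ := by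
      gcongr
      exact mul_nonneg hgap (by linarith)
    _ = 1 * l := by rw [phiLimit_sub_mul_mul_pow_of_root hl.le h, one_mul]

end Root

theorem phi_kappa_lambda_limit_general (l : ℝ) (hl0 : 0 < l)
    (φ : ℕ → ℝ) (hφpos : ∀ κ, 1 ≤ κ → 0 < φ κ)
    (hφroot : ∀ κ, 1 ≤ κ →
      (φ κ) ^ (κ + 1) - (φ κ) ^ κ - l * ∑ i ∈ Finset.range (κ + 1), (φ κ) ^ i = 0) :
    (∀ κ, 1 ≤ κ → 1 + l ≤ φ κ) ∧
    Filter.Tendsto φ Filter.atTop (nhds ((2 + l + Real.sqrt (l ^ 2 + 4 * l)) / 2)) := by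
  refine ⟨fun κ hκ => one_add_le_of_root hl0.le (hφpos κ hκ) (hφroot κ hκ), ?_⟩
  have hdecay : Tendsto (fun κ : ℕ => ((1 + l) ^ κ)⁻¹) atTop (𝓝 0) := by
    simpa only [inv_pow] using
      tendsto_pow_atTop_nhds_zero_of_lt_one (r := (1 + l)⁻¹) (by positivity)
        (inv_lt_one_of_one_lt₀ (by linarith))
  have hlower : Tendsto (fun κ : ℕ => phiLimit l - ((1 + l) ^ κ)⁻¹) atTop (𝓝 (phiLimit l)) := by
    simpa using tendsto_const_nhds.sub hdecay
  refine tendsto_of_tendsto_of_tendsto_of_le_of_le' hlower tendsto_const_nhds ?_ ?_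
  · filter_upwards [eventually_ge_atTop 1] with κ hκ
    linarith [phiLimit_sub_le_of_root hl0 (hφpos κ hκ) (hφroot κ hκ)]
  · filter_upwards [eventually_ge_atTop 1] with κ hκ
    exact le_phiLimit_of_root hl0 (hφpos κ hκ) (hφroot κ hκ)

/-- For 0 < λ < 1, the unique positive root φ_{κ,λ} of
X^{κ+1} - X^κ - λ(X^κ + ... + 1) satisfies φ_{κ,λ} ≥ 1 + λ and converges, as κ → ∞,
to φ_λ = (2 + λ + √(λ² + 4λ))/2. -/
theorem phi_kappa_lambda_limit (l : ℝ) (hl0 : 0 < l) (hl1 : l < 1)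
    (φ : ℕ → ℝ) (hφpos : ∀ κ, 1 ≤ κ → 0 < φ κ)
    (hφroot : ∀ κ, 1 ≤ κ →
      (φ κ) ^ (κ + 1) - (φ κ) ^ κ - l * ∑ i ∈ Finset.range (κ + 1), (φ κ) ^ i = 0) :
    (∀ κ, 1 ≤ κ → 1 + l ≤ φ κ) ∧
    Filter.Tendsto φ Filter.atTop (nhds ((2 + l + Real.sqrt (l ^ 2 + 4 * l)) / 2)) :=
  phi_kappa_lambda_limit_general l hl0 φ hφpos hφroot
end
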